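/- (Proposition two_min_renewed, Hopf–Lax form.) Let U_o : ℝ → ℝ be Lipschitz continuous and let W := S_T U_o be its Hopf–Lax evolution at time T. Let u_T : ℝ → ℝ be left continuous with u_T(x) = W'(x) for a.e. x ∈ ℝ. Then for every x ∈ ℝ, W(x) = U_o(π_{u_T}(x)) + T·f*((x − π_{u_T}(x))/T), where π_{u_T}(x) := x − T·f'(u_T(x)). -/

import Mathlib

open Filter MeasureTheory

/-- Condition (f): `f` is `C²`, strongly convex (`f'' > 0` everywhere), and
`f' → ∓∞` at `∓∞`. -/
def CondF (f : ℝ → ℝ) : Prop :=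
  ContDiff ℝ 2 f ∧ (∀ x, 0 < deriv (deriv f) x) ∧
    Tendsto (deriv f) atBot atBot ∧ Tendsto (deriv f) atTop atTop

/-- The Legendre transform `f*(y) = sup_x (y·x − f(x))`. -/
noncomputable def legendre (f : ℝ → ℝ) (y : ℝ) : ℝ :=
  sSup (Set.range fun x => y * x - f x)

/-- `U_T(x) = ∫_{x̌}^x u_T`. -/
noncomputable def UT (uT : ℝ → ℝ) (xc x : ℝ) : ℝ := ∫ ξ in xc..x, uT ξ

/-- `U_o^♭(x) = sup_ξ [U_T(ξ) − T f*((ξ−x)/T)]`. -/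
noncomputable def Uflat (f : ℝ → ℝ) (T : ℝ) (uT : ℝ → ℝ) (xc x : ℝ) : ℝ :=
  sSup (Set.range fun ξ => UT uT xc ξ - T * legendre f ((ξ - x) / T))

/-- `M(x)`: the set of maximizers in the definition of `U_o^♭(x)`. -/
def MSet (f : ℝ → ℝ) (T : ℝ) (uT : ℝ → ℝ) (xc x : ℝ) : Set ℝ :=
  {ξ | UT uT xc ξ = Uflat f T uT xc x + T * legendre f ((ξ - x) / T)}

/-- Oleinik condition (O) at `T`. -/
def Oleinik (f : ℝ → ℝ) (T : ℝ) (uT : ℝ → ℝ) : Prop :=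
  ∀ x Δ : ℝ, 0 < Δ → deriv f (uT (x + Δ)) - deriv f (uT x) ≤ Δ / T

/-- The Hopf–Lax operator at time `T`: `(S_T U)(x) = inf_ξ [U(ξ) + T f*((x−ξ)/T)]`. -/
noncomputable def HopfLax (f : ℝ → ℝ) (T : ℝ) (U : ℝ → ℝ) (x : ℝ) : ℝ :=
  sInf (Set.range fun ξ => U ξ + T * legendre f ((x - ξ) / T))

/-- Left continuity of a real function. -/
def LeftCts (u : ℝ → ℝ) : Prop :=
  ∀ x, Tendsto u (nhdsWithin x (Set.Iio x)) (nhds (u x))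

/-- `II_T(U_T; J)`: Lipschitz functions with a.e. derivative in `J` evolving into `U_T`
under the Hopf–Lax semigroup. -/
def IIT (f : ℝ → ℝ) (T : ℝ) (uT : ℝ → ℝ) (xc : ℝ) (J : Set ℝ) : Set (ℝ → ℝ) :=
  {U | (∃ K, LipschitzWith K U) ∧ (∀ᵐ x ∂volume, deriv U x ∈ J) ∧
    ∀ x, HopfLax f T U x = UT uT xc x}

/-- `U_o^♯(x) = sup { U(x) : U ∈ II_T(U_T; J) }`. -/
noncomputable def Usharp (f : ℝ → ℝ) (T : ℝ) (uT : ℝ → ℝ) (xc : ℝ) (J : Set ℝ) (x : ℝ) : ℝ :=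
  sSup ((fun U : ℝ → ℝ => U x) '' IIT f T uT xc J)

/-!
By superlinearity of `f*` the infimum defining `W = S_T U_o` at `x` is attained at some `ξ`.
Where `W` is differentiable, `z ↦ U_o(ξ) + T f*((z - ξ)/T)` touches `W` from above at `x`, so
`W'(x) = (f*)'((x - ξ)/T) = (f')⁻¹((x - ξ)/T)`, i.e. `ξ = x - T f'(W'(x))`: this is the formula
at almost every `x`. Both sides of the formula are left continuous in `x` (`W` is Lipschitz and
`u_T` is left continuous), and left continuous functions that agree almost everywhere agree
everywhere.
-/

open Set Topology

lemma ConvexOn.add_mul_sub_le_of_hasDerivAt {S : Set ℝ} {f : ℝ → ℝ} {y x₀ x : ℝ}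
    (hfc : ConvexOn ℝ S f) (hx₀ : x₀ ∈ S) (hx : x ∈ S) (hf : HasDerivAt f y x₀) :
    f x₀ + y * (x - x₀) ≤ f x := by
  rcases lt_trichotomy x x₀ with hlt | rfl | hgt
  · have h := hfc.slope_le_of_hasDerivAt hx hx₀ hlt hf
    rw [slope_def_field, div_le_iff₀ (sub_pos.mpr hlt)] at h
    linarith
  · simp
  · have h := hfc.le_slope_of_hasDerivAt hx₀ hx hgt hf
    rw [slope_def_field, le_div_iff₀ (sub_pos.mpr hgt)] at h
    linarith

lemma frequently_nhdsLT_of_ae {μ : Measure ℝ} [μ.IsOpenPosMeasure] {p : ℝ → Prop}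
    (hp : ∀ᵐ z ∂μ, p z) (x : ℝ) : ∃ᶠ z in 𝓝[<] x, p z := fun hev ↦ by
  obtain ⟨l, hl, hsub⟩ := mem_nhdsLT_iff_exists_Ioo_subset.mp hev
  exact (Measure.measure_Ioo_pos μ |>.mpr hl).ne' (measure_mono_null hsub (ae_iff.mp hp))

lemma eq_of_tendsto_nhdsLT_of_ae_eq {Y : Type*} [TopologicalSpace Y] [T2Space Y]
    {μ : Measure ℝ} [μ.IsOpenPosMeasure] {g h : ℝ → Y} {x : ℝ}
    (hg : Tendsto g (𝓝[<] x) (𝓝 (g x))) (hh : Tendsto h (𝓝[<] x) (𝓝 (h x)))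
    (hgh : g =ᵐ[μ] h) : g x = h x :=
  tendsto_nhds_unique_of_frequently_eq hg hh (frequently_nhdsLT_of_ae hgh x)

namespace CondF

variable {f : ℝ → ℝ}

lemma contDiff_deriv (hf : CondF f) : ContDiff ℝ 1 (deriv f) :=
  (contDiff_succ_iff_deriv.mp hf.1).2.2

lemma differentiable (hf : CondF f) : Differentiable ℝ f :=
  hf.1.differentiable (by norm_num)

lemma strictMono_deriv (hf : CondF f) : StrictMono (deriv f) :=
  strictMono_of_deriv_pos hf.2.1

lemma surjective_deriv (hf : CondF f) : Function.Surjective (deriv f) :=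
  hf.contDiff_deriv.continuous.surjective hf.2.2.2 hf.2.2.1

lemma convexOn (hf : CondF f) : ConvexOn ℝ univ f :=
  hf.strictMono_deriv.monotone.convexOn_univ_of_deriv hf.differentiable

noncomputable def derivOrderIso (hf : CondF f) : ℝ ≃o ℝ :=
  hf.strictMono_deriv.orderIsoOfSurjective _ hf.surjective_deriv

lemma deriv_derivOrderIso_symm (hf : CondF f) (y : ℝ) : deriv f (hf.derivOrderIso.symm y) = y :=
  hf.derivOrderIso.apply_symm_apply y

lemma hasDerivAt_derivOrderIso_symm (hf : CondF f) (y : ℝ) :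
    HasDerivAt hf.derivOrderIso.symm (deriv (deriv f) (hf.derivOrderIso.symm y))⁻¹ y :=
  .of_local_left_inverse hf.derivOrderIso.symm.continuous.continuousAt
    (hf.contDiff_deriv.differentiable one_ne_zero _).hasDerivAt (hf.2.1 _).ne'
    (.of_forall hf.deriv_derivOrderIso_symm)

lemma isGreatest_range_mul_sub (hf : CondF f) (y : ℝ) :
    IsGreatest (range fun x => y * x - f x)
      (y * hf.derivOrderIso.symm y - f (hf.derivOrderIso.symm y)) := by
  refine ⟨⟨_, rfl⟩, ?_⟩
  rintro _ ⟨x, rfl⟩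
  have := hf.convexOn.add_mul_sub_le_of_hasDerivAt (mem_univ _) (mem_univ x)
    (hf.deriv_derivOrderIso_symm y ▸ (hf.differentiable _).hasDerivAt)
  linarith

lemma legendre_eq (hf : CondF f) (y : ℝ) :
    legendre f y = y * hf.derivOrderIso.symm y - f (hf.derivOrderIso.symm y) :=
  (hf.isGreatest_range_mul_sub y).csSup_eq

lemma mul_sub_le_legendre (hf : CondF f) (y x : ℝ) : y * x - f x ≤ legendre f y :=
  hf.legendre_eq y ▸ (hf.isGreatest_range_mul_sub y).2 ⟨x, rfl⟩

lemma continuous_legendre (hf : CondF f) : Continuous (legendre f) := by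
  rw [funext hf.legendre_eq]
  have := hf.derivOrderIso.symm.continuous
  have := hf.differentiable.continuous
  fun_prop

lemma hasDerivAt_legendre (hf : CondF f) (y : ℝ) :
    HasDerivAt (legendre f) (hf.derivOrderIso.symm y) y := by
  set φ := hf.derivOrderIso.symm
  have hφ := hf.hasDerivAt_derivOrderIso_symm y
  have h := ((hasDerivAt_id y).mul hφ).sub ((hf.differentiable (φ y)).hasDerivAt.comp y hφ)
  rw [hf.deriv_derivOrderIso_symm, id, one_mul, add_sub_cancel_right] at h
  exact (funext hf.legendre_eq).symm ▸ h

lemma mul_abs_sub_le_legendre (hf : CondF f) (c y : ℝ) :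
    c * |y| - max (f c) (f (-c)) ≤ legendre f y := by
  rcases le_or_gt 0 y with hy | hy
  · have := hf.mul_sub_le_legendre y c
    rw [abs_of_nonneg hy]
    have := le_max_left (f c) (f (-c))
    linarith
  · have := hf.mul_sub_le_legendre y (-c)
    rw [abs_of_neg hy]
    have := le_max_right (f c) (f (-c))
    linarith

end CondF

section HopfLax

variable {f : ℝ → ℝ} {T : ℝ} {U : ℝ → ℝ} {K : NNReal}

lemma add_dist_sub_le_add_legendre (hf : CondF f) (hT : 0 < T) (hU : LipschitzWith K U)
    (x ξ : ℝ) :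
    U x + dist ξ x - T * max (f (K + 1 : ℝ)) (f (-(K + 1 : ℝ))) ≤
      U ξ + T * legendre f ((x - ξ) / T) := by
  have hcoer := hf.mul_abs_sub_le_legendre (K + 1 : ℝ) ((x - ξ) / T)
  rw [abs_div, abs_of_pos hT, ← Real.dist_eq, dist_comm] at hcoer
  have hscaled := mul_le_mul_of_nonneg_left hcoer hT.le
  rw [mul_sub, show T * ((K + 1 : ℝ) * (dist ξ x / T)) = (K + 1) * dist ξ x by field_simp]
    at hscaled
  have := hU.le_add_mul x ξ
  rw [dist_comm] at this
  linarith

lemma bddBelow_range_add_legendre (hf : CondF f) (hT : 0 < T) (hU : LipschitzWith K U)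
    (x : ℝ) : BddBelow (range fun ξ => U ξ + T * legendre f ((x - ξ) / T)) := by
  refine ⟨U x - T * max (f (K + 1 : ℝ)) (f (-(K + 1 : ℝ))), ?_⟩
  rintro _ ⟨ξ, rfl⟩
  linarith [add_dist_sub_le_add_legendre hf hT hU x ξ, dist_nonneg (x := ξ) (y := x)]

lemma hopfLax_le (hf : CondF f) (hT : 0 < T) (hU : LipschitzWith K U) (x ξ : ℝ) :
    HopfLax f T U x ≤ U ξ + T * legendre f ((x - ξ) / T) :=
  csInf_le (bddBelow_range_add_legendre hf hT hU x) ⟨ξ, rfl⟩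

lemma exists_hopfLax_eq (hf : CondF f) (hT : 0 < T) (hU : LipschitzWith K U) (x : ℝ) :
    ∃ ξ, HopfLax f T U x = U ξ + T * legendre f ((x - ξ) / T) := by
  set Φ := fun ξ => U ξ + T * legendre f ((x - ξ) / T)
  have hΦ : Continuous Φ := by
    have := hU.continuous
    have := hf.continuous_legendre
    fun_prop
  have hcoer : Tendsto Φ (cocompact ℝ) atTop :=
    tendsto_atTop_mono (add_dist_sub_le_add_legendre hf hT hU x)
      (tendsto_atTop_add_const_right _ _
        (tendsto_atTop_add_const_left _ _ (tendsto_dist_right_cocompact_atTop x)))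
  obtain ⟨ξ, hξ⟩ := hΦ.exists_forall_le hcoer
  exact ⟨ξ, IsLeast.csInf_eq ⟨⟨ξ, rfl⟩, by rintro _ ⟨η, rfl⟩; exact hξ η⟩⟩

lemma lipschitzWith_hopfLax (hf : CondF f) (hT : 0 < T) (hU : LipschitzWith K U) :
    LipschitzWith K (HopfLax f T U) := by
  refine .of_le_add_mul K fun x y => ?_
  suffices HopfLax f T U x - K * dist x y ≤ HopfLax f T U y by linarith
  refine le_csInf (range_nonempty _) ?_
  rintro _ ⟨ξ, rfl⟩
  have hshift := hopfLax_le hf hT hU x (ξ + (x - y))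
  rw [show x - (ξ + (x - y)) = y - ξ by ring] at hshift
  have := hU.le_add_mul (ξ + (x - y)) ξ
  rw [Real.dist_eq, add_sub_cancel_left] at this
  rw [Real.dist_eq]
  dsimp only
  linarith

lemma hopfLax_eq_of_hasDerivAt {x p : ℝ} (hf : CondF f) (hT : 0 < T) (hU : LipschitzWith K U)
    (hd : HasDerivAt (HopfLax f T U) p x) :
    HopfLax f T U x = U (x - T * deriv f p) + T * legendre f ((x - (x - T * deriv f p)) / T) := by
  obtain ⟨ξ, hξ⟩ := exists_hopfLax_eq hf hT hU x
  set y := (x - ξ) / T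
  set D := fun z => U ξ + T * legendre f ((z - ξ) / T) - HopfLax f T U z
  have hmin : IsLocalMin D x := .of_forall fun z => by
    have := hopfLax_le hf hT hU z ξ
    simp only [D]
    linarith
  have hD : HasDerivAt D (T * (hf.derivOrderIso.symm y * (1 / T)) - p) x :=
    ((((hf.hasDerivAt_legendre y).comp x
      (((hasDerivAt_id x).sub_const ξ).div_const T)).const_mul T).const_add _).sub hd
  have hslope : hf.derivOrderIso.symm y = p := by
    have := hmin.hasDerivAt_eq_zero hD
    field_simp at this
    linarith
  have hy : deriv f p = y := by rw [← hslope, hf.deriv_derivOrderIso_symm]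
  rw [hξ, hy, show x - T * y = ξ by simp only [y]; field_simp; ring]

end HopfLax

theorem stmt_12 (f : ℝ → ℝ) (hf : CondF f) (T : ℝ) (hT : 0 < T)
    (Uo : ℝ → ℝ) (K : NNReal) (hUo : LipschitzWith K Uo)
    (uT : ℝ → ℝ) (hlc : LeftCts uT)
    (hW : ∀ᵐ x ∂volume, HasDerivAt (HopfLax f T Uo) (uT x) x) :
    ∀ x : ℝ,
      HopfLax f T Uo x =
        Uo (x - T * deriv f (uT x)) +
          T * legendre f ((x - (x - T * deriv f (uT x))) / T) := by
  intro x
  have hW_cont := (lipschitzWith_hopfLax hf hT hUo).continuous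
  have hΦ : Continuous fun q : ℝ × ℝ =>
      Uo (q.1 - T * deriv f q.2) + T * legendre f ((q.1 - (q.1 - T * deriv f q.2)) / T) := by
    have := hUo.continuous
    have := hf.continuous_legendre
    have := hf.contDiff_deriv.continuous
    fun_prop
  refine eq_of_tendsto_nhdsLT_of_ae_eq (μ := volume)
    (hW_cont.continuousAt.tendsto.mono_left nhdsWithin_le_nhds)
    (hΦ.continuousAt.tendsto.comp ((tendsto_nhdsWithin_of_tendsto_nhds tendsto_id).prodMk_nhds
      (hlc x))) ?_
  filter_upwards [hW] with z hz using hopfLax_eq_of_hasDerivAt hf hT hUo hz
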